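/- arXiv:2512.24524 — 4 statements merged into one kernel-verified Lean document; each statement's English description precedes it below -/
import Mathlib

section
/- Let y, y' ∈ ℝ^d with |y| = |y'| = 1, let a, b ∈ ℝ and v ∈ ℝ^d, and suppose (1 + a) y = (1 + b) y' + v. Then |a - b - v·y| ≤ ½ (1 + |b|) |y - y'|². -/
/-! Pairing the relation `(1 + a) y = (1 + b) y' + v` with `y` gives
`a - b - v·y = (1 + b) (y'·y - 1)`, and for unit vectors `1 - y'·y = ½ |y - y'|²`. -/

section

variable {E : Type*} [NormedAddCommGroup E] [InnerProductSpace ℝ E]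

open scoped RealInnerProductSpace

theorem real_inner_eq_one_sub_half_norm_sub_sq {x y : E} (hx : ‖x‖ = 1) (hy : ‖y‖ = 1) :
    ⟪x, y⟫ = 1 - ‖x - y‖ ^ 2 / 2 := by
  rw [norm_sub_sq_real, hx, hy]
  ring

theorem sub_sub_inner_eq_of_smul_eq {y y' v : E} {a b : ℝ} (hy : ‖y‖ = 1) (hy' : ‖y'‖ = 1)
    (h : (1 + a) • y = (1 + b) • y' + v) :
    a - b - ⟪v, y⟫ = -(1 + b) * (‖y - y'‖ ^ 2 / 2) := by
  have hpair : 1 + a = (1 + b) * ⟪y', y⟫ + ⟪v, y⟫ := by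
    simpa [real_inner_smul_left, inner_add_left, real_inner_self_eq_norm_sq, hy]
      using congrArg (⟪·, y⟫) h
  rw [real_inner_comm, real_inner_eq_one_sub_half_norm_sub_sq hy hy'] at hpair
  linear_combination hpair

end

/-- If `y, y'` are unit vectors in `ℝ^d`, `a b : ℝ`, `v ∈ ℝ^d`, and
`(1 + a) y = (1 + b) y' + v`, then `|a - b - v·y| ≤ ½ (1 + |b|) |y - y'|²`. -/
theorem stmt1 {d : ℕ} (y y' v : EuclideanSpace ℝ (Fin d)) (a b : ℝ)
    (hy : ‖y‖ = 1) (hy' : ‖y'‖ = 1)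
    (h : (1 + a) • y = (1 + b) • y' + v) :
    |a - b - (inner ℝ v y : ℝ)| ≤ (1/2) * (1 + |b|) * ‖y - y'‖^2 := by
  rw [sub_sub_inner_eq_of_smul_eq hy hy' h, abs_mul, abs_neg,
    abs_of_nonneg (by positivity : (0 : ℝ) ≤ ‖y - y'‖ ^ 2 / 2)]
  calc |1 + b| * (‖y - y'‖ ^ 2 / 2) ≤ (1 + |b|) * (‖y - y'‖ ^ 2 / 2) := by
        gcongr
        exact (abs_add_le 1 b).trans_eq (by rw [abs_one])
    _ = (1/2) * (1 + |b|) * ‖y - y'‖^2 := by ring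
end

section
/- Let δ > 0, β ≥ 0, T < 0, and let g : (−∞, T] → [0, ∞) be differentiable and satisfy g'(t) ≥ −δ (−t)^{−1} g(t) whenever g(t) > β. Then for all t ≤ T, g(t) ≤ max{g(T), β} · ((−t)/(−T))^{δ} + β. -/
/-- Auxiliary: the core estimate without the `+ β` slack. -/
theorem stmt8_core (δ β T : ℝ) (hδ : 0 < δ) (hβ : 0 ≤ β) (hT : T < 0)
    (g : ℝ → ℝ) (hg : ∀ t ≤ T, DifferentiableAt ℝ g t)
    (hg0 : ∀ t ≤ T, 0 ≤ g t)
    (hg' : ∀ t ≤ T, β < g t → deriv g t ≥ -δ * (-t)⁻¹ * g t) :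
    ∀ t ≤ T, g t ≤ max (g T) β * ((-t) / (-T)) ^ δ := by
  intro t₀ ht₀T
  have hτ : (0:ℝ) < -T := by linarith
  have ht₀0 : t₀ < 0 := lt_of_le_of_lt ht₀T hT
  have ha : (0:ℝ) < -t₀ := by linarith
  have hM0 : 0 ≤ max (g T) β := le_trans hβ (le_max_right _ _)
  have hratio : (1:ℝ) ≤ (-t₀) / (-T) := (one_le_div hτ).2 (by linarith)
  have hrpow1 : (1:ℝ) ≤ ((-t₀) / (-T)) ^ δ := Real.one_le_rpow hratio hδ.le
  by_cases hcase : g t₀ ≤ β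
  · calc g t₀ ≤ β := hcase
      _ ≤ max (g T) β := le_max_right _ _
      _ = max (g T) β * 1 := by ring
      _ ≤ max (g T) β * ((-t₀) / (-T)) ^ δ := by
          exact mul_le_mul_of_nonneg_left hrpow1 hM0
  push_neg at hcase
  -- find a point c ∈ [t₀, T] with g c ≤ max (g T) β and g > β on [t₀, c)
  obtain ⟨c, hct₀, hcT, hgc, hmid⟩ :
      ∃ c, t₀ ≤ c ∧ c ≤ T ∧ g c ≤ max (g T) β ∧ ∀ s, t₀ ≤ s → s < c → β < g s := by
    set S : Set ℝ := {s | s ∈ Set.Icc t₀ T ∧ g s ≤ β} with hSdef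
    by_cases hS : S.Nonempty
    · have hbdd : BddBelow S := ⟨t₀, fun x hx => hx.1.1⟩
      set c := sInf S with hc
      have hccl : c ∈ closure S := csInf_mem_closure hS hbdd
      have hcIcc : c ∈ Set.Icc t₀ T := by
        exact closure_minimal (fun x hx => hx.1) isClosed_Icc hccl
      have hgcβ : g c ≤ β := by
        have hcont : ContinuousWithinAt g S c :=
          ((hg c hcIcc.2).continuousAt).continuousWithinAt
        have hne : (nhdsWithin c S).NeBot := mem_closure_iff_nhdsWithin_neBot.1 hccl
        refine le_of_tendsto hcont ?_
        exact eventually_mem_nhdsWithin.mono fun x hx => hx.2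
      refine ⟨c, hcIcc.1, hcIcc.2, le_trans hgcβ (le_max_right _ _), ?_⟩
      intro s hs1 hs2
      by_contra hcon
      push_neg at hcon
      have hsS : s ∈ S := ⟨⟨hs1, le_trans hs2.le hcIcc.2⟩, hcon⟩
      exact absurd (csInf_le hbdd hsS) (not_le.2 hs2)
    · refine ⟨T, ht₀T, le_refl _, le_max_left _ _, ?_⟩
      intro s hs1 hs2
      by_contra hcon
      push_neg at hcon
      exact hS ⟨s, ⟨hs1, hs2.le⟩, hcon⟩
  have hc0 : c < 0 := lt_of_le_of_lt hcT hT
  have hb : (0:ℝ) < -c := by linarith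
  -- the weighted function φ
  set φ : ℝ → ℝ := fun x => g x * (-x) ^ (-δ) with hφ
  have hder : ∀ x ≤ T, HasDerivAt φ
      (deriv g x * (-x) ^ (-δ) + g x * (-1 * -δ * (-x) ^ (-δ - 1))) x := by
    intro x hx
    have hx0 : (0:ℝ) < -x := by linarith
    have h1 : HasDerivAt (fun y : ℝ => (-y) ^ (-δ)) (-1 * -δ * (-x) ^ (-δ - 1)) x :=
      (hasDerivAt_neg x).rpow_const (Or.inl (ne_of_gt hx0))
    exact ((hg x hx).hasDerivAt).mul h1
  have hmono : MonotoneOn φ (Set.Icc t₀ c) := by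
    apply monotoneOn_of_deriv_nonneg (convex_Icc t₀ c)
    · intro x hx
      exact ((hder x (le_trans hx.2 hcT)).continuousAt).continuousWithinAt
    · intro x hx
      rw [interior_Icc] at hx
      exact ((hder x (le_trans hx.2.le hcT)).differentiableAt).differentiableWithinAt
    · intro x hx
      rw [interior_Icc] at hx
      have hxT : x ≤ T := le_trans hx.2.le hcT
      have hx0 : (0:ℝ) < -x := by linarith [lt_of_le_of_lt hxT hT]
      rw [(hder x hxT).deriv]
      have hgx : β < g x := hmid x hx.1.le hx.2
      have hd := hg' x hxT hgx
      have hA : (0:ℝ) < (-x) ^ (-δ) := Real.rpow_pos_of_pos hx0 _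
      have hA' : (-x) ^ (-δ - 1) = (-x) ^ (-δ) * (-x)⁻¹ := by
        rw [show -δ - 1 = -δ + (-1) by ring, Real.rpow_add hx0, Real.rpow_neg_one]
      rw [hA']
      have h2 : deriv g x * (-x) ^ (-δ) ≥ (-δ * (-x)⁻¹ * g x) * (-x) ^ (-δ) :=
        mul_le_mul_of_nonneg_right hd hA.le
      nlinarith [h2]
  have hkey : φ t₀ ≤ φ c :=
    hmono (Set.mem_Icc.2 ⟨le_refl _, hct₀⟩) (Set.mem_Icc.2 ⟨hct₀, le_refl _⟩) hct₀
  have haδ : (0:ℝ) < (-t₀) ^ δ := Real.rpow_pos_of_pos ha _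
  have hbδ : (0:ℝ) < (-c) ^ δ := Real.rpow_pos_of_pos hb _
  have hneg : ∀ y : ℝ, 0 < y → y ^ (-δ) = (y ^ δ)⁻¹ := fun y hy => Real.rpow_neg hy.le _
  have hstep1 : g t₀ ≤ g c * ((-t₀) / (-c)) ^ δ := by
    have hφt : φ t₀ = g t₀ * ((-t₀) ^ δ)⁻¹ := by rw [hφ]; simp [hneg _ ha]
    have hφc : φ c = g c * ((-c) ^ δ)⁻¹ := by rw [hφ]; simp [hneg _ hb]
    rw [hφt, hφc] at hkey
    have hdiv : ((-t₀) / (-c)) ^ δ = (-t₀) ^ δ / (-c) ^ δ := Real.div_rpow ha.le hb.le δ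
    rw [hdiv]
    rw [div_eq_mul_inv, ← mul_assoc]
    calc g t₀ = g t₀ * ((-t₀) ^ δ)⁻¹ * (-t₀) ^ δ := by
          field_simp
      _ ≤ g c * ((-c) ^ δ)⁻¹ * (-t₀) ^ δ := mul_le_mul_of_nonneg_right hkey haδ.le
      _ = g c * (-t₀) ^ δ * ((-c) ^ δ)⁻¹ := by ring
  have hstep2 : g c * ((-t₀) / (-c)) ^ δ ≤ max (g T) β * ((-t₀) / (-T)) ^ δ := by
    have hgc0 : 0 ≤ g c := hg0 c hcT
    have hrle : (-t₀) / (-c) ≤ (-t₀) / (-T) := by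
      apply div_le_div_of_nonneg_left ha.le hτ (by linarith)
    have hrpow : ((-t₀) / (-c)) ^ δ ≤ ((-t₀) / (-T)) ^ δ :=
      Real.rpow_le_rpow (by positivity) hrle hδ.le
    exact mul_le_mul hgc hrpow (by positivity) hM0
  exact le_trans hstep1 hstep2

/-- Backwards Gronwall estimate with threshold: if `g ≥ 0` is differentiable on `(−∞, T]`
with `T < 0` and `g'(t) ≥ −δ (−t)⁻¹ g(t)` whenever `g(t) > β`, then
`g(t) ≤ max{g(T), β} ((−t)/(−T))^δ + β` for all `t ≤ T`. -/
theorem stmt8 (δ β T : ℝ) (hδ : 0 < δ) (hβ : 0 ≤ β) (hT : T < 0)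
    (g : ℝ → ℝ) (hg : ∀ t ≤ T, DifferentiableAt ℝ g t)
    (hg0 : ∀ t ≤ T, 0 ≤ g t)
    (hg' : ∀ t ≤ T, β < g t → deriv g t ≥ -δ * (-t)⁻¹ * g t) :
    ∀ t ≤ T, g t ≤ max (g T) β * ((-t) / (-T)) ^ δ + β := by
  intro t ht
  have := stmt8_core δ β T hδ hβ hT g hg hg0 hg' t ht
  linarith
end

section
/- Let λ > 0, C ≥ 0, T ≤ −1, and let h : (−∞, T] → [0, 1] be differentiable with h'(τ) ≤ −λ h(τ) + C(−τ)^{−1} for all τ ≤ T. Then h(τ) ≤ (C/λ)(−τ)^{−1} for all τ ≤ T. -/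
/-!
Put `c = C / λ`. The barrier `c (-τ)⁻¹` is increasing and satisfies `λ c (-τ)⁻¹ = C (-τ)⁻¹`, so
`u = h - c (-τ)⁻¹` obeys `u' ≤ -λ u`. Hence `e^{λτ} u(τ)` is nonincreasing, and since `u ≤ h ≤ 1`
it is bounded by `e^{λs}` for every `s ≤ τ`; letting `s → -∞` gives `u ≤ 0`.
-/

open Real Set Filter Topology

theorem antitoneOn_exp_mul_of_deriv_le_neg_mul {l T : ℝ} {u : ℝ → ℝ}
    (hu : ∀ s ≤ T, DifferentiableAt ℝ u s) (hderiv : ∀ s ≤ T, deriv u s ≤ -l * u s) :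
    AntitoneOn (fun s => exp (l * s) * u s) (Iic T) := by
  have hasDeriv : ∀ s ≤ T, HasDerivAt (fun s => exp (l * s) * u s)
      (exp (l * s) * (l * u s + deriv u s)) s := fun s hs => by
    have hexp := ((hasDerivAt_id s).const_mul l).exp
    simp only [id, mul_one] at hexp
    exact (hexp.mul (hu s hs).hasDerivAt).congr_deriv (by ring)
  refine antitoneOn_of_deriv_nonpos (convex_Iic T)
    (fun s hs => (hasDeriv s hs).continuousAt.continuousWithinAt) ?_ ?_ <;>
    rw [interior_Iic]
  · exact fun s hs => (hasDeriv s hs.le).differentiableAt.differentiableWithinAt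
  · intro s hs
    rw [(hasDeriv s hs.le).deriv]
    exact mul_nonpos_of_nonneg_of_nonpos (exp_pos _).le (by linarith [hderiv s hs.le])

theorem nonpos_of_deriv_le_neg_mul_of_le {l T M : ℝ} (hl : 0 < l) {u : ℝ → ℝ}
    (hu : ∀ s ≤ T, DifferentiableAt ℝ u s) (hderiv : ∀ s ≤ T, deriv u s ≤ -l * u s)
    (hbdd : ∀ s ≤ T, u s ≤ M) : ∀ τ ≤ T, u τ ≤ 0 := by
  intro τ hτ
  have hanti := antitoneOn_exp_mul_of_deriv_le_neg_mul hu hderiv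
  have hlim : Tendsto (fun s => exp (l * s) * M) atBot (𝓝 0) := by
    simpa using (tendsto_exp_atBot.comp (tendsto_id.const_mul_atBot hl)).mul_const M
  have hweighted : exp (l * τ) * u τ ≤ 0 := by
    refine ge_of_tendsto hlim ?_
    filter_upwards [eventually_le_atBot τ] with s hsτ
    calc exp (l * τ) * u τ ≤ exp (l * s) * u s := hanti (hsτ.trans hτ) hτ hsτ
      _ ≤ exp (l * s) * M := by gcongr; exact hbdd s (hsτ.trans hτ)
  exact nonpos_of_mul_nonpos_right hweighted (exp_pos _)

theorem hasDerivAt_inv_neg {s : ℝ} (hs : s ≠ 0) :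
    HasDerivAt (fun x : ℝ => (-x)⁻¹) ((s ^ 2)⁻¹) s :=
  ((hasDerivAt_neg s).inv (neg_ne_zero.mpr hs)).congr_deriv (by simp)

/-- If `h : (−∞, T] → [0,1]` is differentiable with `h'(τ) ≤ −λ h(τ) + C(−τ)⁻¹` for all
`τ ≤ T ≤ −1`, then `h(τ) ≤ (C/λ)(−τ)⁻¹` for all `τ ≤ T`. -/
theorem stmt10 (l C T : ℝ) (hl : 0 < l) (hC : 0 ≤ C) (hT : T ≤ -1)
    (h : ℝ → ℝ) (hdiff : ∀ τ ≤ T, DifferentiableAt ℝ h τ)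
    (hrange : ∀ τ ≤ T, h τ ∈ Set.Icc (0:ℝ) 1)
    (hineq : ∀ τ ≤ T, deriv h τ ≤ -l * h τ + C * (-τ)⁻¹) :
    ∀ τ ≤ T, h τ ≤ (C / l) * (-τ)⁻¹ := by
  set c := C / l
  have hc : 0 ≤ c := div_nonneg hC hl.le
  have hneg : ∀ s ≤ T, s < 0 := fun s hs => by linarith
  have hbarrier : ∀ s ≤ T, 0 ≤ c * (-s)⁻¹ := fun s hs =>
    mul_nonneg hc (inv_nonneg.mpr (neg_nonneg.mpr (hneg s hs).le))
  have hu : ∀ s ≤ T, HasDerivAt (fun x => h x - c * (-x)⁻¹)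
      (deriv h s - c * (s ^ 2)⁻¹) s := fun s hs =>
    (hdiff s hs).hasDerivAt.sub ((hasDerivAt_inv_neg (hneg s hs).ne).const_mul c)
  have hderiv : ∀ s ≤ T, deriv (fun x => h x - c * (-x)⁻¹) s ≤ -l * (h s - c * (-s)⁻¹) := by
    intro s hs
    have hlc : l * c = C := mul_div_cancel₀ C hl.ne'
    have hbarrier_mono : 0 ≤ c * (s ^ 2)⁻¹ := by positivity
    rw [(hu s hs).deriv]
    linear_combination hineq s hs + hbarrier_mono - (-s)⁻¹ * hlc
  intro τ hτ
  exact sub_nonpos.mp <| nonpos_of_deriv_le_neg_mul_of_le (M := 1) hl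
    (fun s hs => (hu s hs).differentiableAt) hderiv
    (fun s hs => by linarith [(hrange s hs).2, hbarrier s hs]) τ hτ
end

section
/- Let α > 0, A > 0 with A < α, and let f : (−∞, 0] → [0, ∞) be C¹ and satisfy: (i) f'(τ) ≤ 1.1 f(τ) whenever A e^{5τ} < f(τ) < α; (ii) there exist C'' > 0 and a sequence τ_j → −∞ with f(τ_j) ≤ C'' e^{2τ_j}. Then f(τ) ≤ A e^{5τ} for all τ ≤ 0; in particular f(0) ≤ A. -/
open Filter

/-- Grönwall-type step: if `f` satisfies the ODE inequality in the band on `(a,b)`,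
then `f b * exp(-1.1 b) ≤ f a * exp(-1.1 a)`. -/
lemma stmt16_gronwall (α A : ℝ) (f : ℝ → ℝ)
    (hdiff : ∀ τ ≤ (0:ℝ), DifferentiableAt ℝ f τ)
    (hode : ∀ τ ≤ (0:ℝ), A * Real.exp (5 * τ) < f τ → f τ < α →
      deriv f τ ≤ 1.1 * f τ)
    (a b : ℝ) (hab : a ≤ b) (hb : b ≤ 0)
    (hband : ∀ τ ∈ Set.Ioo a b, A * Real.exp (5 * τ) < f τ ∧ f τ < α) :
    f b * Real.exp (-(1.1) * b) ≤ f a * Real.exp (-(1.1) * a) := by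
  set g : ℝ → ℝ := fun τ => f τ * Real.exp (-(1.1) * τ) with hg
  have hderiv : ∀ τ ≤ (0:ℝ), HasDerivAt g
      (deriv f τ * Real.exp (-(1.1) * τ) + f τ * (Real.exp (-(1.1) * τ) * (-(1.1)))) τ := by
    intro τ hτ
    have hf' := (hdiff τ hτ).hasDerivAt
    have he : HasDerivAt (fun t : ℝ => Real.exp (-(1.1) * t))
        (Real.exp (-(1.1) * τ) * (-(1.1))) τ := by
      simpa using (((hasDerivAt_id τ).const_mul (-(1.1:ℝ)))).exp
    exact hf'.mul he
  have hanti : AntitoneOn g (Set.Icc a b) := by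
    apply antitoneOn_of_deriv_nonpos (convex_Icc a b)
    · intro τ hτ
      exact ((hderiv τ (le_trans hτ.2 hb)).continuousAt).continuousWithinAt
    · rw [interior_Icc]
      intro τ hτ
      exact ((hderiv τ (le_trans hτ.2.le hb)).differentiableAt).differentiableWithinAt
    · rw [interior_Icc]
      intro τ hτ
      have hτ0 : τ ≤ 0 := le_trans hτ.2.le hb
      rw [(hderiv τ hτ0).deriv]
      obtain ⟨h1, h2⟩ := hband τ hτ
      have hode' := hode τ hτ0 h1 h2
      have hE := Real.exp_pos (-(1.1) * τ)
      nlinarith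
  exact hanti ⟨le_refl a, hab⟩ ⟨hab, le_refl b⟩ hab

/-- Key ODE argument: let `0 < A < α` and let `f ≥ 0` be differentiable on `(−∞, 0]` with
`f'(τ) ≤ 1.1 f(τ)` whenever `A e^{5τ} < f(τ) < α`, and suppose `f(τ_j) ≤ C'' e^{2τ_j}` along
some sequence `τ_j → −∞`. Then `f(τ) ≤ A e^{5τ}` for all `τ ≤ 0`; in particular `f(0) ≤ A`. -/
theorem stmt16 (α A : ℝ) (hα : 0 < α) (hA : 0 < A) (hAα : A < α)
    (f : ℝ → ℝ)
    (hdiff : ∀ τ ≤ (0:ℝ), DifferentiableAt ℝ f τ)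
    (hf0 : ∀ τ ≤ (0:ℝ), 0 ≤ f τ)
    (hode : ∀ τ ≤ (0:ℝ), A * Real.exp (5 * τ) < f τ → f τ < α →
      deriv f τ ≤ 1.1 * f τ)
    (hseq : ∃ C'' > (0:ℝ), ∃ seq : ℕ → ℝ, Tendsto seq atTop atBot ∧
      ∀ j, f (seq j) ≤ C'' * Real.exp (2 * seq j)) :
    (∀ τ ≤ (0:ℝ), f τ ≤ A * Real.exp (5 * τ)) ∧ f 0 ≤ A := by
  obtain ⟨C'', hC'', seq, htend, hbound⟩ := hseq
  have key : ∀ τ₀ ≤ (0:ℝ), f τ₀ ≤ A * Real.exp (5 * τ₀) := by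
    intro τ₀ hτ₀
    by_contra hcon
    push_neg at hcon
    -- the intermediate level c
    set c : ℝ := min (f τ₀) ((A * Real.exp (5 * τ₀) + α) / 2) with hc
    have hAexp : A * Real.exp (5 * τ₀) < α := by
      have : Real.exp (5 * τ₀) ≤ 1 := Real.exp_le_one_iff.mpr (by linarith)
      nlinarith
    have hc_gt : A * Real.exp (5 * τ₀) < c := lt_min hcon (by linarith)
    have hc_lt_α : c < α := lt_of_le_of_lt (min_le_right _ _) (by linarith)
    have hc_le : c ≤ f τ₀ := min_le_left _ _
    have hc_pos : 0 < c := lt_trans (by positivity) hc_gt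
    -- pick a good index j
    have h1 : Tendsto (fun j => C'' * Real.exp (0.9 * seq j)) atTop (nhds (C'' * 0)) := by
      exact (Real.tendsto_exp_atBot.comp (htend.const_mul_atBot (by norm_num))).const_mul C''
    rw [mul_zero] at h1
    have h2 : ∀ᶠ j in atTop, C'' * Real.exp (0.9 * seq j) < c :=
      h1.eventually_lt_const hc_pos
    have h3 : ∀ᶠ j in atTop, seq j ≤ τ₀ := htend.eventually_le_atBot τ₀
    obtain ⟨j, hj2, hj3⟩ := (h2.and h3).exists
    set s : ℝ := seq j with hsdef
    have hs0 : s ≤ 0 := le_trans hj3 hτ₀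
    have hfs : f s < c := by
      have h2s : Real.exp (2 * s) ≤ Real.exp (0.9 * s) :=
        Real.exp_le_exp.mpr (by nlinarith)
      calc f s ≤ C'' * Real.exp (2 * s) := hbound j
        _ ≤ C'' * Real.exp (0.9 * s) := by nlinarith
        _ < c := hj2
    have hcont : ContinuousOn f (Set.Icc s τ₀) := fun τ hτ =>
      ((hdiff τ (le_trans hτ.2 hτ₀)).continuousAt).continuousWithinAt
    -- first time f hits level c
    set T : Set ℝ := Set.Icc s τ₀ ∩ f ⁻¹' {c} with hT
    have hTclosed : IsClosed T :=
      hcont.preimage_isClosed_of_isClosed isClosed_Icc isClosed_singleton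
    have hTne : T.Nonempty := by
      obtain ⟨τ, hτ, hτ'⟩ := intermediate_value_Icc hj3 hcont ⟨hfs.le, hc_le⟩
      exact ⟨τ, hτ, hτ'⟩
    have hTbdd : BddBelow T := ⟨s, fun x hx => hx.1.1⟩
    set τ₂ : ℝ := sInf T with hτ₂def
    have hτ₂mem : τ₂ ∈ T := hTclosed.csInf_mem hTne hTbdd
    have hsτ₂ : s ≤ τ₂ := hτ₂mem.1.1
    have hτ₂τ₀ : τ₂ ≤ τ₀ := hτ₂mem.1.2
    have hτ₂0 : τ₂ ≤ 0 := le_trans hτ₂τ₀ hτ₀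
    have hfτ₂ : f τ₂ = c := hτ₂mem.2
    have hlt_before : ∀ τ ∈ Set.Ico s τ₂, f τ < c := by
      intro τ hτ
      by_contra hge
      push_neg at hge
      have hττ₀ : τ ≤ τ₀ := le_trans hτ.2.le hτ₂τ₀
      obtain ⟨σ, hσ, hσ'⟩ := intermediate_value_Icc hτ.1
        (hcont.mono (Set.Icc_subset_Icc le_rfl hττ₀)) ⟨hfs.le, hge⟩
      have : τ₂ ≤ σ := csInf_le hTbdd ⟨⟨hσ.1, le_trans hσ.2 hττ₀⟩, hσ'⟩
      have : σ ≤ τ := hσ.2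
      linarith [hτ.2]
    have hsτ₂lt : s < τ₂ := by
      rcases lt_or_eq_of_le hsτ₂ with h | h
      · exact h
      · rw [← h] at hfτ₂; linarith
    have hcτ₂ : A * Real.exp (5 * τ₂) < c :=
      lt_of_le_of_lt (by
        have : Real.exp (5 * τ₂) ≤ Real.exp (5 * τ₀) := Real.exp_le_exp.mpr (by linarith)
        nlinarith) hc_gt
    -- last time f is below the threshold, if any
    set S : Set ℝ := Set.Icc s τ₂ ∩ (fun τ => f τ - A * Real.exp (5 * τ)) ⁻¹' Set.Iic 0 with hS
    have hScont : ContinuousOn (fun τ => f τ - A * Real.exp (5 * τ)) (Set.Icc s τ₂) := by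
      apply ContinuousOn.sub
      · exact hcont.mono (Set.Icc_subset_Icc le_rfl hτ₂τ₀)
      · fun_prop
    have hSclosed : IsClosed S :=
      hScont.preimage_isClosed_of_isClosed isClosed_Icc isClosed_Iic
    rcases Set.eq_empty_or_nonempty S with hSe | hSne
    · -- f stays in the band on (s, τ₂)
      have hband : ∀ τ ∈ Set.Ioo s τ₂, A * Real.exp (5 * τ) < f τ ∧ f τ < α := by
        intro τ hτ
        constructor
        · by_contra hle
          push_neg at hle
          have : τ ∈ S := ⟨⟨hτ.1.le, hτ.2.le⟩, by simp [Set.mem_Iic]; linarith⟩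
          rw [hSe] at this; exact this
        · exact lt_trans (hlt_before τ ⟨hτ.1.le, hτ.2⟩) hc_lt_α
      have hgron := stmt16_gronwall α A f hdiff hode s τ₂ hsτ₂ hτ₂0 hband
      rw [hfτ₂] at hgron
      have hE2 : (0:ℝ) < Real.exp (-(1.1) * τ₂) := Real.exp_pos _
      have hEs : Real.exp (2 * s) * Real.exp (-(1.1) * s) = Real.exp (0.9 * s) := by
        rw [← Real.exp_add]; ring_nf
      have hub : f s * Real.exp (-(1.1) * s) ≤ C'' * Real.exp (0.9 * s) := by
        have := hbound j
        have hEp : (0:ℝ) < Real.exp (-(1.1) * s) := Real.exp_pos _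
        calc f s * Real.exp (-(1.1) * s) ≤ (C'' * Real.exp (2 * s)) * Real.exp (-(1.1) * s) := by
              nlinarith
          _ = C'' * Real.exp (0.9 * s) := by rw [mul_assoc, hEs]
      have hE2le : Real.exp (-(1.1) * τ₂) ≥ 1 := by
        rw [ge_iff_le, ← Real.exp_zero]
        exact Real.exp_le_exp.mpr (by nlinarith)
      nlinarith
    · set τ₁ : ℝ := sSup S with hτ₁def
      have hSbdd : BddAbove S := ⟨τ₂, fun x hx => hx.1.2⟩
      have hτ₁mem : τ₁ ∈ S := hSclosed.csSup_mem hSne hSbdd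
      have hτ₁le : f τ₁ ≤ A * Real.exp (5 * τ₁) := by
        have := hτ₁mem.2; simp [Set.mem_Iic] at this; linarith
      have hsτ₁ : s ≤ τ₁ := hτ₁mem.1.1
      have hτ₁τ₂ : τ₁ ≤ τ₂ := hτ₁mem.1.2
      have hτ₁lt : τ₁ < τ₂ := by
        rcases lt_or_eq_of_le hτ₁τ₂ with h | h
        · exact h
        · rw [h, hfτ₂] at hτ₁le; linarith
      have hband : ∀ τ ∈ Set.Ioo τ₁ τ₂, A * Real.exp (5 * τ) < f τ ∧ f τ < α := by
        intro τ hτ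
        constructor
        · by_contra hle
          push_neg at hle
          have hmem : τ ∈ S := ⟨⟨le_trans hsτ₁ hτ.1.le, hτ.2.le⟩, by
            simp [Set.mem_Iic]; linarith⟩
          have : τ ≤ τ₁ := le_csSup hSbdd hmem
          linarith [hτ.1]
        · exact lt_trans (hlt_before τ ⟨le_trans hsτ₁ hτ.1.le, hτ.2⟩) hc_lt_α
      have hgron := stmt16_gronwall α A f hdiff hode τ₁ τ₂ hτ₁τ₂ hτ₂0 hband
      rw [hfτ₂] at hgron
      have hE1 : (0:ℝ) < Real.exp (-(1.1) * τ₁) := Real.exp_pos _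
      have hE2 : (0:ℝ) < Real.exp (-(1.1) * τ₂) := Real.exp_pos _
      have heq1 : A * Real.exp (5 * τ₁) * Real.exp (-(1.1) * τ₁) = A * Real.exp (3.9 * τ₁) := by
        rw [mul_assoc, ← Real.exp_add]; ring_nf
      have hstep : f τ₁ * Real.exp (-(1.1) * τ₁) ≤ A * Real.exp (3.9 * τ₁) := by
        rw [← heq1]
        exact mul_le_mul_of_nonneg_right hτ₁le hE1.le
      have heq2 : A * Real.exp (5 * τ₂) * Real.exp (-(1.1) * τ₂) = A * Real.exp (3.9 * τ₂) := by
        rw [mul_assoc, ← Real.exp_add]; ring_nf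
      have hfinal : A * Real.exp (3.9 * τ₁) ≤ A * Real.exp (5 * τ₂) * Real.exp (-(1.1) * τ₂) := by
        rw [heq2]
        exact mul_le_mul_of_nonneg_left (Real.exp_le_exp.mpr (by linarith)) hA.le
      -- c * exp(-1.1 τ₂) ≤ A exp(5τ₂) exp(-1.1τ₂) ⇒ c ≤ A exp(5τ₂), contradiction
      have hle : c * Real.exp (-(1.1) * τ₂) ≤ A * Real.exp (5 * τ₂) * Real.exp (-(1.1) * τ₂) :=
        le_trans hgron (le_trans hstep hfinal)
      have : c ≤ A * Real.exp (5 * τ₂) := le_of_mul_le_mul_right hle hE2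
      linarith
  refine ⟨key, ?_⟩
  have := key 0 le_rfl
  simpa using this
end
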